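/- arXiv:math/0605617 — 4 statements merged into one kernel-verified Lean document; each statement's English description precedes it below -/
import Mathlib

section
/- For every real α > 0 and σ > 0, the integral ∫₀^∞ u^{α-1} (1 - Φ(√u/σ)) du equals 2^{α-1} Γ(α + 1/2) σ^{2α} / (α √π), where Φ is the standard normal cumulative distribution function. -/
/-!
Write `1 - Φ(y) = (2π)^{-1/2} ∫_y^∞ e^{-z²/2} dz`. The substitution `u = σ² t²` turns the
integral into `2 σ^{2α} ∫_0^∞ t^{2α-1} (1 - Φ(t)) dt`, and Fubini gives
`∫_0^∞ t^{p-1} ∫_t^∞ g(z) dz dt = p⁻¹ ∫_0^∞ z^p g(z) dz`, which leaves the Gaussian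
moment `∫_0^∞ z^{2α} e^{-z²/2} dz = 2^{α-1/2} Γ(α + 1/2)`.
-/

open Real MeasureTheory Set

/-- The standard normal cumulative distribution function. -/
noncomputable def stdNormalCDF (y : ℝ) : ℝ :=
  (Real.sqrt (2 * Real.pi))⁻¹ * ∫ z in Set.Iic y, Real.exp (-z ^ 2 / 2)

section TailMoment

variable {g : ℝ → ℝ} {p : ℝ}

lemma integral_Ioi_indicator_Iio_rpow_sub_one (hp : 0 < p) {z : ℝ} (hz : 0 ≤ z) :
    ∫ t in Ioi 0, (Iio z).indicator (fun t => t ^ (p - 1)) t = z ^ p / p := by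
  rw [setIntegral_indicator measurableSet_Iio, Ioi_inter_Iio, ← integral_Ioc_eq_integral_Ioo,
    ← intervalIntegral.integral_of_le hz, integral_rpow (Or.inl (by linarith)), sub_add_cancel,
    zero_rpow hp.ne', sub_zero]

lemma integrableOn_Ioi_indicator_Iio_rpow_sub_one (hp : 0 < p) (z : ℝ) :
    IntegrableOn ((Iio z).indicator fun t => t ^ (p - 1)) (Ioi 0) := by
  rw [IntegrableOn, integrable_indicator_iff measurableSet_Iio, IntegrableOn,
    Measure.restrict_restrict measurableSet_Iio, Iio_inter_Ioi]
  exact (intervalIntegral.intervalIntegrable_rpow' (by linarith)).1.mono_set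
    (Ioo_subset_Ioc_self.trans Ioc_subset_uIoc)

lemma aestronglyMeasurable_of_integrableOn_rpow_mul
    (hg : IntegrableOn (fun z => z ^ p * g z) (Ioi 0)) :
    AEStronglyMeasurable g (volume.restrict (Ioi 0)) := by
  refine (hg.aestronglyMeasurable.mul (measurable_id.pow_const (-p)).aestronglyMeasurable).congr ?_
  filter_upwards [ae_restrict_mem measurableSet_Ioi] with z (hz : 0 < z)
  simp only [Pi.mul_apply, id]
  rw [mul_comm, ← mul_assoc, ← rpow_add hz, neg_add_cancel, rpow_zero, one_mul]

lemma integrable_indicator_lt_rpow_mul (hp : 0 < p)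
    (hg : IntegrableOn (fun z => z ^ p * g z) (Ioi 0)) :
    Integrable (fun q : ℝ × ℝ => (Iio q.2).indicator (fun t => t ^ (p - 1)) q.1 * g q.2)
      ((volume.restrict (Ioi 0)).prod (volume.restrict (Ioi 0))) := by
  have hind : Measurable fun q : ℝ × ℝ => (Iio q.2).indicator (fun t => t ^ (p - 1)) q.1 :=
    (Measurable.indicator (by fun_prop) (measurableSet_lt measurable_fst measurable_snd) :
      Measurable ({q : ℝ × ℝ | q.1 < q.2}.indicator fun q => q.1 ^ (p - 1)))
  refine (integrable_prod_iff' (hind.aestronglyMeasurable.mul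
    (aestronglyMeasurable_of_integrableOn_rpow_mul hg).comp_snd)).2
    ⟨ae_of_all _ fun z => (integrableOn_Ioi_indicator_Iio_rpow_sub_one hp z).mul_const (g z),
      (hg.norm.div_const p).congr ?_⟩
  filter_upwards [ae_restrict_mem measurableSet_Ioi] with z (hz : 0 < z)
  have hnorm : ∀ t ∈ Ioi (0 : ℝ), ‖(Iio z).indicator (fun t => t ^ (p - 1)) t * g z‖
      = (Iio z).indicator (fun t => t ^ (p - 1)) t * ‖g z‖ := by
    intro t (ht : 0 < t)
    by_cases htz : t < z <;> simp [htz, norm_of_nonneg (rpow_pos_of_pos ht _).le]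
  rw [Pi.mul_def, setIntegral_congr_fun measurableSet_Ioi hnorm, integral_mul_const,
    integral_Ioi_indicator_Iio_rpow_sub_one hp hz.le, norm_mul,
    norm_of_nonneg (rpow_nonneg hz.le p)]
  ring

theorem integral_Ioi_rpow_mul_integral_Ioi (hp : 0 < p)
    (hg : IntegrableOn (fun z => z ^ p * g z) (Ioi 0)) :
    ∫ t in Ioi 0, t ^ (p - 1) * ∫ z in Ioi t, g z = (∫ z in Ioi 0, z ^ p * g z) / p := by
  have hfst : ∀ t ∈ Ioi (0 : ℝ), t ^ (p - 1) * ∫ z in Ioi t, g z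
      = ∫ z in Ioi 0, (Iio z).indicator (fun t => t ^ (p - 1)) t * g z := by
    intro t (ht : 0 < t)
    have : (fun z => (Iio z).indicator (fun t => t ^ (p - 1)) t * g z)
        = fun z => t ^ (p - 1) * (Ioi t).indicator g z := by
      ext z
      by_cases htz : t < z <;> simp [htz]
    rw [this, integral_const_mul, setIntegral_indicator measurableSet_Ioi, Ioi_inter_Ioi,
      sup_eq_right.2 ht.le]
  have hsnd : ∀ z ∈ Ioi (0 : ℝ),
      ∫ t in Ioi 0, (Iio z).indicator (fun t => t ^ (p - 1)) t * g z = z ^ p * g z / p := by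
    intro z (hz : 0 < z)
    rw [integral_mul_const, integral_Ioi_indicator_Iio_rpow_sub_one hp hz.le]
    ring
  rw [setIntegral_congr_fun measurableSet_Ioi hfst,
    integral_integral_swap (integrable_indicator_lt_rpow_mul hp hg), ← integral_div]
  exact setIntegral_congr_fun measurableSet_Ioi hsnd

end TailMoment

lemma integral_Ioi_rpow_mul_comp_sqrt (F : ℝ → ℝ) (α : ℝ) :
    ∫ u in Ioi 0, u ^ (α - 1) * F √u = 2 * ∫ x in Ioi 0, x ^ (2 * α - 1) * F x := by
  rw [← integral_comp_rpow_Ioi_of_pos two_pos, ← integral_const_mul]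
  refine setIntegral_congr_fun measurableSet_Ioi fun x (hx : 0 < x) => ?_
  rw [rpow_two, sqrt_sq hx.le, smul_eq_mul, ← rpow_natCast, ← rpow_mul hx.le,
    show (2 : ℝ) - 1 = 1 by norm_num, rpow_one, show 2 * α - 1 = 1 + 2 * (α - 1) by ring,
    rpow_add hx, rpow_one]
  push_cast
  ring

lemma integral_Ioi_rpow_mul_comp_div (F : ℝ → ℝ) (q : ℝ) {σ : ℝ} (hσ : 0 < σ) :
    ∫ x in Ioi 0, x ^ q * F (x / σ) = σ ^ (q + 1) * ∫ t in Ioi 0, t ^ q * F t := by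
  have h := integral_comp_mul_left_Ioi (fun x => x ^ q * F (x / σ)) 0 hσ
  simp only [mul_zero, smul_eq_mul, mul_div_cancel_left₀ _ hσ.ne'] at h
  rw [eq_inv_mul_iff_mul_eq₀ hσ.ne'] at h
  rw [← h, ← integral_const_mul, ← integral_const_mul]
  refine setIntegral_congr_fun measurableSet_Ioi fun t (ht : 0 < t) => ?_
  rw [mul_rpow hσ.le ht.le, rpow_add_one hσ.ne']
  ring

lemma exp_neg_sq_div_two_eq (z : ℝ) : exp (-z ^ 2 / 2) = exp (-(1 / 2) * z ^ 2) := by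
  ring_nf

lemma integrable_exp_neg_sq_div_two : Integrable fun z : ℝ => exp (-z ^ 2 / 2) := by
  simpa only [exp_neg_sq_div_two_eq] using integrable_exp_neg_mul_sq (b := 1 / 2) (by norm_num)

lemma integral_exp_neg_sq_div_two : ∫ z : ℝ, exp (-z ^ 2 / 2) = √(2 * π) := by
  simp only [exp_neg_sq_div_two_eq, integral_gaussian]
  ring_nf

lemma integrableOn_Ioi_rpow_mul_exp_neg_sq_div_two {q : ℝ} (hq : -1 < q) :
    IntegrableOn (fun z => z ^ q * exp (-z ^ 2 / 2)) (Ioi 0) := by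
  simpa only [exp_neg_sq_div_two_eq] using
    integrableOn_rpow_mul_exp_neg_mul_sq (b := 1 / 2) (by norm_num) hq

lemma integral_Ioi_rpow_mul_exp_neg_sq_div_two {q : ℝ} (hq : -1 < q) :
    ∫ z in Ioi 0, z ^ q * exp (-z ^ 2 / 2) = 2 ^ ((q - 1) / 2) * Gamma ((q + 1) / 2) := by
  have h := integral_rpow_mul_exp_neg_mul_rpow two_pos hq (b := 1 / 2) (by norm_num)
  simp only [rpow_two, ← exp_neg_sq_div_two_eq] at h
  rw [h, one_div, inv_rpow zero_le_two, ← rpow_neg zero_le_two, neg_div, neg_neg,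
    show (q + 1) / 2 = (q - 1) / 2 + 1 by ring, rpow_add_one two_ne_zero]
  ring

lemma one_sub_stdNormalCDF (y : ℝ) :
    1 - stdNormalCDF y = (√(2 * π))⁻¹ * ∫ z in Ioi y, exp (-z ^ 2 / 2) := by
  have hsplit := intervalIntegral.integral_Iic_add_Ioi (b := y)
    integrable_exp_neg_sq_div_two.integrableOn integrable_exp_neg_sq_div_two.integrableOn
  have hpos : 0 < √(2 * π) := by positivity
  rw [integral_exp_neg_sq_div_two] at hsplit
  rw [stdNormalCDF, eq_sub_of_add_eq' hsplit]
  field_simp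

theorem gaussian_tail_moment (α σ : ℝ) (hα : 0 < α) (hσ : 0 < σ) :
    ∫ u in Set.Ioi (0 : ℝ), u ^ (α - 1) * (1 - stdNormalCDF (Real.sqrt u / σ))
      = 2 ^ (α - 1) * Real.Gamma (α + 1 / 2) * σ ^ (2 * α) / (α * Real.sqrt Real.pi) := by
  set tail : ℝ → ℝ := fun y => ∫ z in Ioi y, exp (-z ^ 2 / 2)
  calc ∫ u in Ioi 0, u ^ (α - 1) * (1 - stdNormalCDF (√u / σ))
      = (√(2 * π))⁻¹ * ∫ u in Ioi 0, u ^ (α - 1) * tail (√u / σ) := by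
        rw [← integral_const_mul]
        congr 1 with u
        rw [one_sub_stdNormalCDF, mul_left_comm]
    _ = (√(2 * π))⁻¹ * (2 * σ ^ (2 * α) * ∫ t in Ioi 0, t ^ (2 * α - 1) * tail t) := by
        rw [integral_Ioi_rpow_mul_comp_sqrt (fun y => tail (y / σ)),
          integral_Ioi_rpow_mul_comp_div tail _ hσ, sub_add_cancel, mul_assoc]
    _ = (√(2 * π))⁻¹ *
          (2 * σ ^ (2 * α) * (2 ^ ((2 * α - 1) / 2) * Gamma (α + 1 / 2) / (2 * α))) := by
        rw [integral_Ioi_rpow_mul_integral_Ioi (by positivity)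
            (integrableOn_Ioi_rpow_mul_exp_neg_sq_div_two (by linarith)),
          integral_Ioi_rpow_mul_exp_neg_sq_div_two (by linarith),
          show (2 * α + 1) / 2 = α + 1 / 2 by ring]
    _ = 2 ^ (α - 1) * Gamma (α + 1 / 2) * σ ^ (2 * α) / (α * √π) := by
        rw [show (2 * α - 1) / 2 = (α - 1) + 1 / 2 by ring, rpow_add two_pos, ← sqrt_eq_rpow,
          sqrt_mul zero_le_two]
        field_simp
end

section
/- Let X₁, X₂, ... be i.i.d. centered random variables with variance σ² ∈ (0,∞) and Sₖ = X₁ + ... + Xₖ. Then for every k ≥ 1, ε > 0, and r > 1, P(Sₖ ≥ εk) ≤ k P(X₁ ≥ εk/r) + (e r σ²)^r ε^{-2r} k^{-r}. -/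
/-!
Truncate at `v = εk/r`. Unless some `Xᵢ` with `i < k` reaches `v`, `Sₖ` equals the sum of the
truncations `min Xᵢ v`, which are bounded above by `v`, have nonpositive mean and second moment
at most `σ²`. Since `(eˣ - 1 - x) / x²` is increasing, `e^y ≤ 1 + y + y² (e^b - 1 - b) / b²` for
`y ≤ b`; this bounds their moment generating function, and Chernoff's bound with the optimal
parameter gives Bennett's inequality `exp (-(kσ²/v²) h(vx/(kσ²)))`, `h u = (1+u) log (1+u) - u`.
At `x = εk` the argument of `h` is `A = ε²k/(rσ²)`, and `(r/A) h(A) ≥ r (log A - 1)` turns the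
bound into `(e/A)^r`, the second term.
-/

open Real MeasureTheory Finset ProbabilityTheory
open scoped Nat

namespace Real

lemma hasSum_exp_sub_one_sub (x : ℝ) :
    HasSum (fun n : ℕ => x ^ (n + 2) / (n + 2)!) (exp x - 1 - x) := by
  have h := (hasSum_nat_add_iff' 2).2 (NormedSpace.expSeries_div_hasSum_exp x)
  rw [← exp_eq_exp_ℝ] at h
  simpa [sum_range_succ, sub_sub] using h

lemma exp_sub_one_sub_mul_sq_le {a b : ℝ} (ha : 0 ≤ a) (hab : a ≤ b) :
    (exp a - 1 - a) * b ^ 2 ≤ (exp b - 1 - b) * a ^ 2 := by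
  refine hasSum_le (fun n => ?_) ((hasSum_exp_sub_one_sub a).mul_right _)
    ((hasSum_exp_sub_one_sub b).mul_right _)
  have : a ^ n * (a * b) ^ 2 ≤ b ^ n * (a * b) ^ 2 := by gcongr
  rw [div_mul_eq_mul_div, div_mul_eq_mul_div]
  exact div_le_div_of_nonneg_right (by linear_combination this) (by positivity)

lemma exp_le_one_add_add_sq_div_two {x : ℝ} (hx : x ≤ 0) : exp x ≤ 1 + x + x ^ 2 / 2 := by
  have h := quadratic_le_exp_of_nonneg (neg_nonneg.2 hx)
  have h2 : exp x * exp (-x) = 1 := by rw [← exp_add]; simp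
  nlinarith [exp_pos x, sq_nonneg (1 + x)]

lemma exp_le_one_add_add_mul_sq {x b : ℝ} (hb : 0 < b) (hxb : x ≤ b) :
    exp x ≤ 1 + x + (exp b - 1 - b) / b ^ 2 * x ^ 2 := by
  rw [div_mul_eq_mul_div, ← sub_le_iff_le_add', le_div_iff₀ (by positivity)]
  rcases le_total x 0 with hx | hx
  · have hb2 : b ^ 2 / 2 ≤ exp b - 1 - b := by linarith [quadratic_le_exp_of_nonneg hb.le]
    have := exp_le_one_add_add_sq_div_two hx
    nlinarith [mul_le_mul_of_nonneg_right hb2 (sq_nonneg x)]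
  · rw [← sub_sub]
    exact exp_sub_one_sub_mul_sq_le hx hxb

end Real

noncomputable def bennettFun (u : ℝ) : ℝ := (1 + u) * log (1 + u) - u

lemma exp_neg_mul_bennettFun_le {u r : ℝ} (hu : 0 < u) (hr : 0 ≤ r) :
    exp (-(r / u) * bennettFun u) ≤ (exp 1 / u) ^ r := by
  set L := log (1 + u)
  have hL0 : 0 ≤ L := log_nonneg (by linarith)
  have hlogu : log u ≤ L := log_le_log hu (by linarith)
  have hLL : L ≤ (1 + u) / u * L :=
    le_mul_of_one_le_left hL0 ((one_le_div hu).2 (by linarith))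
  have hexpo : -(r / u) * bennettFun u = r - r * ((1 + u) / u * L) := by
    simp only [bennettFun, L]
    field_simp
    ring
  rw [rpow_def_of_pos (by positivity), log_div (exp_pos 1).ne' hu.ne', log_exp, hexpo]
  gcongr
  nlinarith

lemma fuk_nagaev_const_eq {ε k r σ : ℝ} (hε : 0 < ε) (hk : 0 < k) (hr : 0 < r) (hσ : 0 < σ) :
    (exp 1 * r * σ ^ 2) ^ r * ε ^ (-(2 : ℝ) * r) * k ^ (-r)
      = (exp 1 / (ε ^ 2 * k / (r * σ ^ 2))) ^ r := by
  have : exp 1 / (ε ^ 2 * k / (r * σ ^ 2)) = exp 1 * r * σ ^ 2 * (ε ^ 2)⁻¹ * k⁻¹ := by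
    field_simp
  rw [this, mul_rpow (x := exp 1 * r * σ ^ 2 * (ε ^ 2)⁻¹) (by positivity) (inv_nonneg.2 hk.le),
    mul_rpow (x := exp 1 * r * σ ^ 2) (by positivity) (by positivity), inv_rpow hk.le,
    rpow_neg hk.le, rpow_mul hε.le, rpow_neg hε.le, rpow_two]

namespace ProbabilityTheory

variable {Ω ι : Type*} [MeasurableSpace Ω] {μ : Measure Ω}

lemma mgf_le_exp_of_ae_le [IsProbabilityMeasure μ] {Y : Ω → ℝ} {v t σ2 : ℝ} (hv : 0 < v)
    (ht : 0 < t) (hYv : ∀ᵐ ω ∂μ, Y ω ≤ v) (hint : Integrable Y μ)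
    (hint2 : Integrable (fun ω => Y ω ^ 2) μ) (hmean : μ[Y] ≤ 0)
    (hvar : μ[fun ω => Y ω ^ 2] ≤ σ2) :
    mgf Y μ t ≤ exp ((exp (t * v) - 1 - t * v) / v ^ 2 * σ2) := by
  set C := (exp (t * v) - 1 - t * v) / v ^ 2
  have hC : 0 ≤ C := div_nonneg (by linarith [add_one_le_exp (t * v)]) (sq_nonneg v)
  have hquad : ∀ᵐ ω ∂μ, exp (t * Y ω) ≤ 1 + t * Y ω + C * Y ω ^ 2 := by
    filter_upwards [hYv] with ω hω
    convert exp_le_one_add_add_mul_sq (mul_pos ht hv) (mul_le_mul_of_nonneg_left hω ht.le)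
      using 2
    simp only [C]
    field_simp
  have hlin : Integrable (fun ω => 1 + t * Y ω) μ := (integrable_const 1).add (hint.const_mul t)
  calc mgf Y μ t ≤ ∫ ω, 1 + t * Y ω + C * Y ω ^ 2 ∂μ :=
        integral_mono_of_nonneg (ae_of_all _ fun ω => (exp_pos _).le)
          (hlin.add (hint2.const_mul C)) hquad
    _ = 1 + t * μ[Y] + C * μ[fun ω => Y ω ^ 2] := by
        rw [integral_add hlin (hint2.const_mul C),
          integral_add (integrable_const 1) (hint.const_mul t), integral_const_mul,
          integral_const_mul]
        simp
    _ ≤ 1 + C * σ2 := by nlinarith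
    _ ≤ exp (C * σ2) := by linarith [add_one_le_exp (C * σ2)]

lemma measureReal_sum_ge_le_exp_of_ae_le [IsProbabilityMeasure μ] {Y : ι → Ω → ℝ} {j : ι}
    (hmeas : ∀ i, Measurable (Y i)) (hindep : iIndepFun Y μ)
    (hident : ∀ i, IdentDistrib (Y i) (Y j) μ μ) {v t σ2 : ℝ} (hv : 0 < v) (ht : 0 < t)
    (hYv : ∀ᵐ ω ∂μ, Y j ω ≤ v) (hint : Integrable (Y j) μ)
    (hint2 : Integrable (fun ω => Y j ω ^ 2) μ) (hmean : μ[Y j] ≤ 0)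
    (hvar : μ[fun ω => Y j ω ^ 2] ≤ σ2) (s : Finset ι) (x : ℝ) :
    μ.real {ω | x ≤ ∑ i ∈ s, Y i ω}
      ≤ exp (-t * x + #s * ((exp (t * v) - 1 - t * v) / v ^ 2 * σ2)) := by
  have hexp : ∀ i, Integrable (fun ω => exp (t * Y i ω)) μ := fun i =>
    ((hident i).comp (measurable_const_mul t).exp).integrable_iff.2
      (integrable_exp_mul_of_le t v ht.le hint.aemeasurable hYv)
  have hmgf : mgf (∑ i ∈ s, Y i) μ t = mgf (Y j) μ t ^ #s := by
    rw [hindep.mgf_sum hmeas]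
    exact prod_eq_pow_card fun i _ => mgf_congr_of_identDistrib _ _ (hident i) t
  calc μ.real {ω | x ≤ ∑ i ∈ s, Y i ω}
      = μ.real {ω | x ≤ (∑ i ∈ s, Y i) ω} := by simp only [Finset.sum_apply]
    _ ≤ exp (-t * x) * mgf (∑ i ∈ s, Y i) μ t :=
        measure_ge_le_exp_mul_mgf x ht.le (hindep.integrable_exp_mul_sum hmeas fun i _ => hexp i)
    _ ≤ exp (-t * x) * exp ((exp (t * v) - 1 - t * v) / v ^ 2 * σ2) ^ #s := by
        rw [hmgf]
        gcongr
        · exact mgf_nonneg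
        · exact mgf_le_exp_of_ae_le hv ht hYv hint hint2 hmean hvar
    _ = exp (-t * x + #s * ((exp (t * v) - 1 - t * v) / v ^ 2 * σ2)) := by
        rw [← exp_nat_mul, ← exp_add]

theorem measureReal_sum_ge_le_exp_bennettFun [IsProbabilityMeasure μ] {Y : ι → Ω → ℝ} {j : ι}
    (hmeas : ∀ i, Measurable (Y i)) (hindep : iIndepFun Y μ)
    (hident : ∀ i, IdentDistrib (Y i) (Y j) μ μ) {v σ2 : ℝ} (hv : 0 < v) (hσ2 : 0 < σ2)
    (hYv : ∀ᵐ ω ∂μ, Y j ω ≤ v) (hint : Integrable (Y j) μ)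
    (hint2 : Integrable (fun ω => Y j ω ^ 2) μ) (hmean : μ[Y j] ≤ 0)
    (hvar : μ[fun ω => Y j ω ^ 2] ≤ σ2) {s : Finset ι} (hs : s.Nonempty) {x : ℝ} (hx : 0 < x) :
    μ.real {ω | x ≤ ∑ i ∈ s, Y i ω}
      ≤ exp (-(#s * σ2 / v ^ 2) * bennettFun (v * x / (#s * σ2))) := by
  have hn : (0 : ℝ) < #s * σ2 := by have := hs.card_pos; positivity
  have hu : 0 < v * x / (#s * σ2) := by positivity
  have hxu : x = v * x / (#s * σ2) * (#s * σ2) / v := by field_simp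
  generalize v * x / (#s * σ2) = u at hu hxu ⊢
  -- the optimal Chernoff parameter: `exp (t * v) = 1 + u`
  refine (measureReal_sum_ge_le_exp_of_ae_le hmeas hindep hident hv
    (t := log (1 + u) / v) (div_pos (log_pos (by linarith)) hv) hYv hint hint2 hmean hvar
    s x).trans_eq ?_
  rw [div_mul_cancel₀ _ hv.ne', exp_log (by positivity), bennettFun, hxu]
  congr 1
  field_simp
  ring

lemma sq_min_le_sq {x v : ℝ} (hv : 0 ≤ v) : min x v ^ 2 ≤ x ^ 2 := by
  rcases le_total x v with hxv | hvx
  · rw [min_eq_left hxv]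
  · rw [min_eq_right hvx]
    exact pow_le_pow_left₀ hv hvx 2

theorem measureReal_sum_min_ge_le_exp_bennettFun [IsProbabilityMeasure μ] {X : ι → Ω → ℝ}
    {j : ι} (hmeas : ∀ i, Measurable (X i)) (hindep : iIndepFun X μ)
    (hident : ∀ i, IdentDistrib (X i) (X j) μ μ) {v σ2 : ℝ} (hv : 0 < v) (hσ2 : 0 < σ2)
    (hint : Integrable (X j) μ) (hint2 : Integrable (fun ω => X j ω ^ 2) μ) (hmean : μ[X j] ≤ 0)
    (hvar : μ[fun ω => X j ω ^ 2] ≤ σ2) {s : Finset ι} (hs : s.Nonempty) {x : ℝ} (hx : 0 < x) :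
    μ.real {ω | x ≤ ∑ i ∈ s, min (X i ω) v}
      ≤ exp (-(#s * σ2 / v ^ 2) * bennettFun (v * x / (#s * σ2))) := by
  have hmin : Measurable fun y : ℝ => min y v := measurable_id.min measurable_const
  have hYint : Integrable (fun ω => min (X j ω) v) μ := hint.inf (integrable_const v)
  have hYint2 : Integrable (fun ω => min (X j ω) v ^ 2) μ :=
    hint2.mono (hYint.aestronglyMeasurable.pow 2) (ae_of_all _ fun ω => by
      simpa only [norm_pow, Real.norm_eq_abs, sq_abs] using sq_min_le_sq hv.le)
  exact measureReal_sum_ge_le_exp_bennettFun (Y := fun i ω => min (X i ω) v)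
    (fun i => hmin.comp (hmeas i)) (hindep.comp _ fun _ => hmin)
    (fun i => (hident i).comp hmin) hv hσ2 (ae_of_all _ fun ω => min_le_right _ _) hYint hYint2
    ((integral_mono hYint hint fun ω => min_le_left _ _).trans hmean)
    ((integral_mono hYint2 hint2 fun ω => sq_min_le_sq hv.le).trans hvar) hs hx

lemma measureReal_sum_ge_le_truncate_add [IsFiniteMeasure μ] (X : ι → Ω → ℝ) (s : Finset ι)
    (x v : ℝ) :
    μ.real {ω | x ≤ ∑ i ∈ s, X i ω}
      ≤ μ.real {ω | x ≤ ∑ i ∈ s, min (X i ω) v} + ∑ i ∈ s, μ.real {ω | v ≤ X i ω} := by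
  have hsub : {ω | x ≤ ∑ i ∈ s, X i ω}
      ⊆ {ω | x ≤ ∑ i ∈ s, min (X i ω) v} ∪ ⋃ i ∈ s, {ω | v ≤ X i ω} := by
    intro ω hω
    by_cases hbig : ∃ i ∈ s, v ≤ X i ω
    · obtain ⟨i, hi, hvi⟩ := hbig
      exact Or.inr (Set.mem_biUnion hi hvi)
    · push Not at hbig
      left
      show x ≤ ∑ i ∈ s, min (X i ω) v
      rwa [sum_congr rfl fun i hi => min_eq_left (hbig i hi).le]
  calc μ.real {ω | x ≤ ∑ i ∈ s, X i ω}
      ≤ μ.real ({ω | x ≤ ∑ i ∈ s, min (X i ω) v} ∪ ⋃ i ∈ s, {ω | v ≤ X i ω}) :=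
        measureReal_mono hsub
    _ ≤ _ := (measureReal_union_le _ _).trans (by gcongr; exact measureReal_biUnion_finset_le _ _)

end ProbabilityTheory

theorem fuk_nagaev_inequality
    {Ω : Type*} [MeasurableSpace Ω] (μ : Measure Ω) [IsProbabilityMeasure μ]
    (X : ℕ → Ω → ℝ) (hmeas : ∀ i, Measurable (X i))
    (hindep : iIndepFun X μ)
    (hident : ∀ i, IdentDistrib (X i) (X 0) μ μ)
    (σ : ℝ) (hσ : 0 < σ)
    (hint : Integrable (X 0) μ) (hmean : μ[X 0] = 0)
    (hint2 : Integrable (fun ω => (X 0 ω) ^ 2) μ) (hvar : μ[fun ω => (X 0 ω) ^ 2] = σ ^ 2) :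
    ∀ (k : ℕ) (ε r : ℝ), 1 ≤ k → 0 < ε → 1 < r →
      (μ {ω | ε * k ≤ ∑ i ∈ Finset.range k, X i ω}).toReal
        ≤ k * (μ {ω | ε * k / r ≤ X 0 ω}).toReal
          + (Real.exp 1 * r * σ ^ 2) ^ r * ε ^ (-(2 : ℝ) * r) * (k : ℝ) ^ (-r) := by
  intro k ε r hk hε hr
  have hk0 : (0 : ℝ) < k := by exact_mod_cast hk
  have hr0 : 0 < r := by linarith
  set A := ε ^ 2 * k / (r * σ ^ 2)
  have hbennett := measureReal_sum_min_ge_le_exp_bennettFun hmeas hindep hident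
    (v := ε * k / r) (by positivity) (pow_pos hσ 2) hint hint2 hmean.le hvar.le
    ⟨0, mem_range.2 hk⟩ (x := ε * k) (by positivity)
  rw [card_range, show k * σ ^ 2 / (ε * k / r) ^ 2 = r / A by simp only [A]; field_simp,
    show ε * k / r * (ε * k) / (k * σ ^ 2) = A by simp only [A]; field_simp] at hbennett
  have htail : ∑ i ∈ range k, μ.real {ω | ε * k / r ≤ X i ω}
      = k * μ.real {ω | ε * k / r ≤ X 0 ω} := by
    have hident_tail : ∀ i, μ.real {ω | ε * k / r ≤ X i ω} = μ.real {ω | ε * k / r ≤ X 0 ω} :=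
      fun i => congrArg ENNReal.toReal ((hident i).measure_mem_eq measurableSet_Ici)
    rw [sum_congr rfl fun i _ => hident_tail i, sum_const, card_range, nsmul_eq_mul]
  calc μ.real {ω | ε * k ≤ ∑ i ∈ range k, X i ω}
      ≤ μ.real {ω | ε * k ≤ ∑ i ∈ range k, min (X i ω) (ε * k / r)}
        + ∑ i ∈ range k, μ.real {ω | ε * k / r ≤ X i ω} :=
        measureReal_sum_ge_le_truncate_add X (range k) (ε * k) (ε * k / r)
    _ ≤ (exp 1 / A) ^ r + k * μ.real {ω | ε * k / r ≤ X 0 ω} := by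
        rw [htail]
        gcongr
        exact hbennett.trans (exp_neg_mul_bennettFun_le (by positivity) hr0.le)
    _ = _ := by rw [fuk_nagaev_const_eq hε hk0 hr0 hσ, add_comm]; rfl
end

section
/- Let X₁, X₂, ... be i.i.d. random variables with E X₁ = 0, E X₁² = σ² ∈ (0,∞), and tail P(X₁ ≥ x) ~ a x^{-θ} as x → ∞ with a > 0, θ > 2. Then there exist constants c₁, c₂ > 0 such that for all k ≥ 1 and ε > 0, P(Sₖ ≥ εk) ≤ c₁ (ε^{-θ} k^{-(θ-1)} + e^{-c₂ ε² k}). -/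
/-!
Truncate at `v = εk/4`: `P(S_k ≥ εk) ≤ k P(X₁ ≥ v) + P(∑ min (X_i, v) ≥ εk)`. The regularly
varying tail gives `P(X₁ ≥ x) ≤ C x^{-θ}` for all `x > 0`, so the first term is `O(Q)` with
`Q = ε^{-θ} k^{-(θ-1)}`. For the truncated sum, `e^y ≤ 1 + y + y²` for `y ≤ 1` bounds the
moment generating function by `exp (l²σ² + e^{lv} P(X₁ ≥ 1/l))`, and the Chernoff bound with
`l = 2t/(εk)`, `0 < t ≤ ε²k/(4σ²)`, gives `exp (-t + B e^t Q)`. Taking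
`t = min (ε²k/(4σ²)) (-log Q)` yields `O(Q + exp (-ε²k/(4σ²)))`.
-/

open Real MeasureTheory Finset Filter ProbabilityTheory Topology

lemma Real.exp_le_one_add_add_sq {x : ℝ} (hx : x ≤ 1) : exp x ≤ 1 + x + x ^ 2 := by
  rcases le_or_gt (-1) x with h | h
  · have := (abs_le.1 (abs_exp_sub_one_sub_id_le (abs_le.2 ⟨h, hx⟩))).2
    linarith
  · nlinarith [exp_lt_one_iff.2 (by linarith : x < 0)]

lemma Real.rpow_le_mul_exp_div {θ c x : ℝ} (hθ : 0 < θ) (hc : 0 < c) (hx : 0 ≤ x) :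
    x ^ θ ≤ (θ * c) ^ θ * exp (x / c) := by
  have hy : x / (θ * c) ≤ exp (x / (θ * c)) := by linarith [add_one_le_exp (x / (θ * c))]
  calc x ^ θ = (θ * c) ^ θ * (x / (θ * c)) ^ θ := by
        rw [← mul_rpow (by positivity) (by positivity), mul_div_cancel₀ _ (by positivity)]
    _ ≤ (θ * c) ^ θ * exp (x / (θ * c)) ^ θ := by gcongr
    _ = (θ * c) ^ θ * exp (x / c) := by
        rw [← exp_mul]
        field_simp

lemma sq_min_le_sq {x v : ℝ} (hv : 0 ≤ v) : min x v ^ 2 ≤ x ^ 2 := by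
  rcases le_total x v with h | h
  · rw [min_eq_left h]
  · rw [min_eq_right h]
    nlinarith

lemma exists_forall_le_mul_rpow_neg_of_tendsto {F : ℝ → ℝ} {a θ : ℝ} (hF : ∀ x, F x ≤ 1)
    (ha : 0 < a) (hθ : 0 ≤ θ) (h : Tendsto (fun x => F x / (a * x ^ (-θ))) atTop (𝓝 1)) :
    ∃ C, 0 ≤ C ∧ ∀ x, 0 < x → F x ≤ C * x ^ (-θ) := by
  obtain ⟨x₀, hx₀⟩ : ∃ x₀, ∀ x, x₀ ≤ x → F x ≤ 2 * a * x ^ (-θ) := by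
    refine eventually_atTop.1 ?_
    filter_upwards [h.eventually_le_const one_lt_two, eventually_gt_atTop 0] with x hx hx0
    rw [div_le_iff₀ (by positivity)] at hx
    linarith
  refine ⟨max (2 * a) (max x₀ 1 ^ θ), by positivity, fun x hx => ?_⟩
  rcases le_total (max x₀ 1) x with hle | hle
  · calc F x ≤ 2 * a * x ^ (-θ) := hx₀ x ((le_max_left _ _).trans hle)
      _ ≤ _ := by gcongr; exact le_max_left _ _
  · calc F x ≤ 1 := hF x
      _ = max x₀ 1 ^ θ * max x₀ 1 ^ (-θ) := by
        rw [rpow_neg (by positivity), mul_inv_cancel₀ (by positivity)]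
      _ ≤ max (2 * a) (max x₀ 1 ^ θ) * x ^ (-θ) :=
        mul_le_mul (le_max_right _ _) (rpow_le_rpow_of_nonpos hx hle (by linarith))
          (by positivity) (by positivity)

lemma le_mul_add_exp_neg_of_forall_le {P A B Q T : ℝ} (hA : 0 ≤ A) (hB : 0 ≤ B) (hQ : 0 < Q)
    (hT : 0 < T) (hP : P ≤ 1)
    (h : ∀ t, 0 < t → t ≤ T → P ≤ A * Q + exp (-t + B * exp t * Q)) :
    P ≤ (A + exp B) * (Q + exp (-T)) := by
  have hB1 : 1 ≤ exp B := one_le_exp hB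
  rcases le_or_gt 1 Q with hQ1 | hQ1
  · nlinarith [exp_pos (-T)]
  set t := min T (-log Q)
  have ht : 0 < t := lt_min hT (neg_pos.2 (log_neg hQ hQ1))
  have htQ : exp t * Q ≤ 1 := by
    calc exp t * Q ≤ exp (-log Q) * Q := by gcongr; exact min_le_right _ _
      _ = 1 := by rw [exp_neg, exp_log hQ, inv_mul_cancel₀ hQ.ne']
  have hexp : exp (-t) ≤ Q + exp (-T) := by
    rcases min_cases T (-log Q) with ⟨hteq, _⟩ | ⟨hteq, _⟩ <;> rw [show t = _ from hteq]
    · linarith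
    · rw [neg_neg, exp_log hQ]
      linarith [exp_pos (-T)]
  calc P ≤ A * Q + exp (-t + B * exp t * Q) := h t ht (min_le_left _ _)
    _ ≤ A * Q + exp (-t + B) := by gcongr; nlinarith
    _ = A * Q + exp B * exp (-t) := by rw [exp_add, mul_comm (exp (-t))]
    _ ≤ (A + exp B) * (Q + exp (-T)) := by nlinarith [exp_pos (-T), exp_pos B]

section Probability

variable {Ω : Type*} [MeasurableSpace Ω] {μ : Measure Ω} [IsProbabilityMeasure μ]

lemma ProbabilityTheory.mgf_le_exp_of_le {Y : Ω → ℝ} {v l : ℝ} (hY : Measurable Y)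
    (hYv : ∀ ω, Y ω ≤ v) (hint : Integrable Y μ) (hint2 : Integrable (fun ω => Y ω ^ 2) μ)
    (hmean : μ[Y] ≤ 0) (hl : 0 ≤ l) :
    mgf Y μ l ≤ exp (l ^ 2 * μ[fun ω => Y ω ^ 2] + exp (l * v) * μ.real {ω | 1 < l * Y ω}) := by
  set A := {ω | 1 < l * Y ω}
  have hA : MeasurableSet A := measurableSet_lt measurable_const (hY.const_mul l)
  have hpt : ∀ ω, exp (l * Y ω)
      ≤ 1 + l * Y ω + l ^ 2 * Y ω ^ 2 + A.indicator (fun _ => exp (l * v)) ω := by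
    intro ω
    by_cases hω : ω ∈ A
    · rw [Set.indicator_of_mem hω]
      have : exp (l * Y ω) ≤ exp (l * v) := exp_le_exp.2 (mul_le_mul_of_nonneg_left (hYv ω) hl)
      nlinarith [sq_nonneg (l * Y ω + 1 / 2)]
    · rw [Set.indicator_of_notMem hω]
      linarith [exp_le_one_add_add_sq (not_lt.1 hω)]
  have hi1 : Integrable (fun ω => 1 + l * Y ω) μ := (integrable_const 1).add (hint.const_mul l)
  have hi2 : Integrable (fun ω => 1 + l * Y ω + l ^ 2 * Y ω ^ 2) μ := hi1.add (hint2.const_mul _)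
  have hiA : Integrable (A.indicator fun _ => exp (l * v)) μ := (integrable_const _).indicator hA
  calc mgf Y μ l
      ≤ ∫ ω, (1 + l * Y ω + l ^ 2 * Y ω ^ 2 + A.indicator (fun _ => exp (l * v)) ω) ∂μ :=
        integral_mono (integrable_exp_mul_of_le l v hl hY.aemeasurable (ae_of_all _ hYv))
          (hi2.add hiA) hpt
    _ = 1 + l * μ[Y] + l ^ 2 * μ[fun ω => Y ω ^ 2] + exp (l * v) * μ.real A := by
        rw [integral_add hi2 hiA, integral_add hi1 (hint2.const_mul _),
          integral_add (integrable_const 1) (hint.const_mul l), integral_const_mul,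
          integral_const_mul, integral_indicator_const _ hA]
        simp [mul_comm]
    _ ≤ 1 + (l ^ 2 * μ[fun ω => Y ω ^ 2] + exp (l * v) * μ.real A) := by
        nlinarith [mul_nonpos_of_nonneg_of_nonpos hl hmean]
    _ ≤ _ := add_one_le_exp _ |>.trans_eq' (add_comm _ _)

lemma ProbabilityTheory.mgf_min_le_of_tail_le {X : Ω → ℝ} (hX : Measurable X)
    (hint : Integrable X μ) (hint2 : Integrable (fun ω => X ω ^ 2) μ) (hmean : μ[X] ≤ 0)
    {C θ : ℝ} (htail : ∀ x, 0 < x → μ.real {ω | x ≤ X ω} ≤ C * x ^ (-θ)) {v l : ℝ} (hv : 0 ≤ v)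
    (hl : 0 < l) :
    mgf (fun ω => min (X ω) v) μ l
      ≤ exp (l ^ 2 * μ[fun ω => X ω ^ 2] + exp (l * v) * (C * l ^ θ)) := by
  have hYmeas : Measurable fun ω => min (X ω) v := hX.min measurable_const
  have hYint : Integrable (fun ω => min (X ω) v) μ := hint.inf (integrable_const v)
  have hYint2 : Integrable (fun ω => min (X ω) v ^ 2) μ :=
    hint2.mono' (hYmeas.pow_const 2).aestronglyMeasurable <| ae_of_all _ fun ω => by
      rw [Real.norm_eq_abs, abs_of_nonneg (sq_nonneg _)]
      exact sq_min_le_sq hv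
  have hYmean : μ[fun ω => min (X ω) v] ≤ 0 :=
    (integral_mono hYint hint fun _ => min_le_left _ _).trans hmean
  have hYtail : μ.real {ω | 1 < l * min (X ω) v} ≤ C * l ^ θ := by
    calc μ.real {ω | 1 < l * min (X ω) v} ≤ μ.real {ω | l⁻¹ ≤ X ω} := by
          refine measureReal_mono fun ω (hω : 1 < l * min (X ω) v) => ?_
          exact (inv_le_iff_one_le_mul₀' hl).2
            (hω.le.trans (mul_le_mul_of_nonneg_left (min_le_left _ _) hl.le))
      _ ≤ C * l ^ θ := by simpa [inv_rpow hl.le, rpow_neg hl.le] using htail l⁻¹ (inv_pos.2 hl)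
  have hYvar : μ[fun ω => min (X ω) v ^ 2] ≤ μ[fun ω => X ω ^ 2] :=
    integral_mono hYint2 hint2 fun _ => sq_min_le_sq hv
  refine (mgf_le_exp_of_le hYmeas (fun _ => min_le_right _ _) hYint hYint2 hYmean hl.le).trans
    (exp_le_exp.2 ?_)
  gcongr

lemma ProbabilityTheory.measureReal_sum_ge_le_exp_mul_mgf_pow {Y : ℕ → Ω → ℝ}
    (hmeas : ∀ i, Measurable (Y i)) (hindep : iIndepFun Y μ)
    (hident : ∀ i, IdentDistrib (Y i) (Y 0) μ μ) {l : ℝ} (hl : 0 ≤ l)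
    (hint : Integrable (fun ω => exp (l * Y 0 ω)) μ) (k : ℕ) (u : ℝ) :
    μ.real {ω | u ≤ ∑ i ∈ range k, Y i ω} ≤ exp (-l * u) * mgf (Y 0) μ l ^ k := by
  have hint_sum : Integrable (fun ω => exp (l * (∑ i ∈ range k, Y i) ω)) μ :=
    hindep.integrable_exp_mul_sum hmeas fun i _ =>
      ((hident i).comp (measurable_const_mul l).exp).integrable_iff.2 hint
  calc μ.real {ω | u ≤ ∑ i ∈ range k, Y i ω} = μ.real {ω | u ≤ (∑ i ∈ range k, Y i) ω} := by
        simp only [Finset.sum_apply]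
    _ ≤ exp (-l * u) * mgf (∑ i ∈ range k, Y i) μ l := measure_ge_le_exp_mul_mgf u hl hint_sum
    _ = exp (-l * u) * mgf (Y 0) μ l ^ k := by
        rw [hindep.mgf_sum hmeas,
          prod_congr rfl fun i _ => congrFun (mgf_congr_identDistrib (hident i)) l, prod_const,
          card_range]

lemma measureReal_sum_ge_le_sum_add_measureReal_sum_min_ge (X : ℕ → Ω → ℝ) (k : ℕ)
    (u v : ℝ) :
    μ.real {ω | u ≤ ∑ i ∈ range k, X i ω}
      ≤ ∑ i ∈ range k, μ.real {ω | v ≤ X i ω}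
        + μ.real {ω | u ≤ ∑ i ∈ range k, min (X i ω) v} := by
  have hsub : {ω | u ≤ ∑ i ∈ range k, X i ω}
      ⊆ (⋃ i ∈ range k, {ω | v ≤ X i ω}) ∪ {ω | u ≤ ∑ i ∈ range k, min (X i ω) v} := by
    intro ω (hω : u ≤ ∑ i ∈ range k, X i ω)
    by_cases hex : ∃ i ∈ range k, v ≤ X i ω
    · obtain ⟨i, hi, hvi⟩ := hex
      exact Or.inl (Set.mem_biUnion hi hvi)
    · push Not at hex
      refine Or.inr (show u ≤ ∑ i ∈ range k, min (X i ω) v from ?_)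
      rwa [sum_congr rfl fun i hi => min_eq_left (hex i hi).le]
  calc _ ≤ _ := measureReal_mono hsub
    _ ≤ _ := measureReal_union_le _ _
    _ ≤ _ := by gcongr; exact measureReal_biUnion_finset_le _ _

lemma ProbabilityTheory.measureReal_sum_ge_le_of_tail_le {X : ℕ → Ω → ℝ}
    (hmeas : ∀ i, Measurable (X i)) (hindep : iIndepFun X μ)
    (hident : ∀ i, IdentDistrib (X i) (X 0) μ μ) (hint : Integrable (X 0) μ)
    (hint2 : Integrable (fun ω => X 0 ω ^ 2) μ) (hmean : μ[X 0] ≤ 0) {C θ : ℝ}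
    (htail : ∀ x, 0 < x → μ.real {ω | x ≤ X 0 ω} ≤ C * x ^ (-θ)) (k : ℕ) (u : ℝ) {v l : ℝ}
    (hv : 0 < v) (hl : 0 < l) :
    μ.real {ω | u ≤ ∑ i ∈ range k, X i ω} ≤ k * (C * v ^ (-θ))
      + exp (-l * u + k * (l ^ 2 * μ[fun ω => X 0 ω ^ 2] + exp (l * v) * (C * l ^ θ))) := by
  have hmin : Measurable fun x : ℝ => min x v := measurable_id.min measurable_const
  have hXv : ∀ i, μ.real {ω | v ≤ X i ω} = μ.real {ω | v ≤ X 0 ω} := fun i =>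
    congrArg ENNReal.toReal ((hident i).measure_mem_eq measurableSet_Ici)
  calc μ.real {ω | u ≤ ∑ i ∈ range k, X i ω}
      ≤ ∑ i ∈ range k, μ.real {ω | v ≤ X i ω}
        + μ.real {ω | u ≤ ∑ i ∈ range k, min (X i ω) v} :=
        measureReal_sum_ge_le_sum_add_measureReal_sum_min_ge X k u v
    _ = k * μ.real {ω | v ≤ X 0 ω} + μ.real {ω | u ≤ ∑ i ∈ range k, min (X i ω) v} := by
        rw [sum_congr rfl fun i _ => hXv i, sum_const, card_range, nsmul_eq_mul]
    _ ≤ k * (C * v ^ (-θ)) + exp (-l * u) * mgf (fun ω => min (X 0 ω) v) μ l ^ k := by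
        gcongr
        · exact htail v hv
        · exact measureReal_sum_ge_le_exp_mul_mgf_pow (fun i => (hmeas i).min measurable_const)
            (hindep.comp (fun _ x => min x v) fun _ => hmin) (fun i => (hident i).comp hmin)
            hl.le (integrable_exp_mul_of_le l v hl.le ((hmeas 0).min measurable_const).aemeasurable
              (ae_of_all _ fun _ => min_le_right _ _)) k u
    _ ≤ k * (C * v ^ (-θ)) + exp (-l * u) *
          exp (l ^ 2 * μ[fun ω => X 0 ω ^ 2] + exp (l * v) * (C * l ^ θ)) ^ k := by
        gcongr
        · exact mgf_nonneg
        · exact mgf_min_le_of_tail_le (hmeas 0) hint hint2 hmean htail hv.le hl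
    _ = _ := by rw [← exp_nat_mul, ← exp_add]

lemma ProbabilityTheory.measureReal_sum_ge_mul_le_add_exp {X : ℕ → Ω → ℝ}
    (hmeas : ∀ i, Measurable (X i)) (hindep : iIndepFun X μ)
    (hident : ∀ i, IdentDistrib (X i) (X 0) μ μ) (hint : Integrable (X 0) μ)
    (hint2 : Integrable (fun ω => X 0 ω ^ 2) μ) (hmean : μ[X 0] ≤ 0) {σ : ℝ}
    (hvar : μ[fun ω => X 0 ω ^ 2] = σ ^ 2) {C θ : ℝ} (hC : 0 ≤ C) (hθ : 0 < θ)
    (htail : ∀ x, 0 < x → μ.real {ω | x ≤ X 0 ω} ≤ C * x ^ (-θ)) {k : ℕ} (hk : 0 < k) {ε t : ℝ}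
    (hε : 0 < ε) (ht : 0 < t) (htT : 4 * σ ^ 2 * t ≤ ε ^ 2 * k) :
    μ.real {ω | ε * k ≤ ∑ i ∈ range k, X i ω}
      ≤ C * 4 ^ θ * (ε ^ (-θ) * (k : ℝ) ^ (-(θ - 1)))
        + exp (-t + C * 4 ^ θ * θ ^ θ * exp t * (ε ^ (-θ) * (k : ℝ) ^ (-(θ - 1)))) := by
  have hk : (0 : ℝ) < k := Nat.cast_pos.2 hk
  have hu : 0 < ε * k := by positivity
  have hQ : k * (ε * k) ^ (-θ) = ε ^ (-θ) * (k : ℝ) ^ (-(θ - 1)) := by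
    rw [mul_rpow hε.le hk.le, show -(θ - 1) = -θ + 1 by ring, rpow_add hk, rpow_one]
    ring
  set Q := ε ^ (-θ) * (k : ℝ) ^ (-(θ - 1))
  refine (measureReal_sum_ge_le_of_tail_le hmeas hindep hident hint hint2 hmean htail k (ε * k)
    (v := ε * k / 4) (l := 2 * t / (ε * k)) (by positivity) (by positivity)).trans
    (add_le_add (le_of_eq ?_) (exp_le_exp.2 ?_))
  · rw [div_rpow hu.le (by norm_num), rpow_neg (by norm_num : (0:ℝ) ≤ 4), ← hQ]
    field_simp
  have h1 : -(2 * t / (ε * k)) * (ε * k) = -(2 * t) := by field_simp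
  have h2 : k * ((2 * t / (ε * k)) ^ 2 * σ ^ 2) ≤ t := by
    rw [show k * ((2 * t / (ε * k)) ^ 2 * σ ^ 2) = t * (4 * σ ^ 2 * t / (ε ^ 2 * k)) by
      field_simp; ring]
    exact mul_le_of_le_one_right ht.le ((div_le_one (by positivity)).2 htT)
  have h3 : k * (exp (2 * t / (ε * k) * (ε * k / 4)) * (C * (2 * t / (ε * k)) ^ θ))
      ≤ C * 4 ^ θ * θ ^ θ * exp t * Q := by
    have hlv : 2 * t / (ε * k) * (ε * k / 4) = t / 2 := by field_simp; ring
    have hl : (2 * t / (ε * k)) ^ θ = 2 ^ θ * t ^ θ * (ε * k) ^ (-θ) := by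
      rw [div_rpow (by positivity) hu.le, mul_rpow (by norm_num) ht.le, rpow_neg hu.le,
        div_eq_mul_inv]
    calc k * (exp (2 * t / (ε * k) * (ε * k / 4)) * (C * (2 * t / (ε * k)) ^ θ))
        = C * 2 ^ θ * (t ^ θ * exp (t / 2)) * Q := by rw [hlv, hl, ← hQ]; ring
      _ ≤ C * 2 ^ θ * ((θ * 2) ^ θ * exp (t / 2) * exp (t / 2)) * Q := by
        gcongr
        exact rpow_le_mul_exp_div hθ two_pos ht.le
      _ = C * 4 ^ θ * θ ^ θ * exp t * Q := by
        rw [mul_assoc _ (exp _), ← exp_add, add_halves, mul_rpow hθ.le (by norm_num),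
          show (4 : ℝ) = 2 * 2 by norm_num, mul_rpow (by norm_num) (by norm_num)]
        ring
  rw [hvar, mul_add]
  linarith

end Probability

theorem sum_tail_bound_regular_tails
    {Ω : Type*} [MeasurableSpace Ω] (μ : Measure Ω) [IsProbabilityMeasure μ]
    (X : ℕ → Ω → ℝ) (hmeas : ∀ i, Measurable (X i))
    (hindep : iIndepFun X μ)
    (hident : ∀ i, IdentDistrib (X i) (X 0) μ μ)
    (σ : ℝ) (hσ : 0 < σ)
    (hint : Integrable (X 0) μ) (hmean : μ[X 0] = 0)
    (hint2 : Integrable (fun ω => (X 0 ω) ^ 2) μ) (hvar : μ[fun ω => (X 0 ω) ^ 2] = σ ^ 2)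
    (a θ : ℝ) (ha : 0 < a) (hθ : 2 < θ)
    (htail : Tendsto (fun x : ℝ => (μ {ω | x ≤ X 0 ω}).toReal / (a * x ^ (-θ)))
      atTop (nhds 1)) :
    ∃ c₁ c₂ : ℝ, 0 < c₁ ∧ 0 < c₂ ∧ ∀ (k : ℕ) (ε : ℝ), 1 ≤ k → 0 < ε →
      (μ {ω | ε * k ≤ ∑ i ∈ Finset.range k, X i ω}).toReal
        ≤ c₁ * (ε ^ (-θ) * (k : ℝ) ^ (-(θ - 1)) + Real.exp (-c₂ * ε ^ 2 * k)) := by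
  obtain ⟨C, hC, htail'⟩ := exists_forall_le_mul_rpow_neg_of_tendsto
    (F := fun x => μ.real {ω | x ≤ X 0 ω}) (fun _ => measureReal_le_one) ha (by linarith) htail
  refine ⟨C * 4 ^ θ + exp (C * 4 ^ θ * θ ^ θ), 1 / (4 * σ ^ 2), by positivity, by positivity,
    fun k ε hk hε => ?_⟩
  have hσ2 : 0 < 4 * σ ^ 2 := by positivity
  have key := le_mul_add_exp_neg_of_forall_le (by positivity) (by positivity)
    (by positivity : 0 < ε ^ (-θ) * (k : ℝ) ^ (-(θ - 1)))
    (by positivity : 0 < ε ^ 2 * k / (4 * σ ^ 2)) measureReal_le_one fun t ht htT =>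
      measureReal_sum_ge_mul_le_add_exp hmeas hindep hident hint hint2 hmean.le hvar hC
        (by linarith) htail' hk hε ht (by rwa [le_div_iff₀' hσ2] at htT)
  rwa [show -(1 / (4 * σ ^ 2)) * ε ^ 2 * k = -(ε ^ 2 * k / (4 * σ ^ 2)) by ring]
end

section
/- Let f : [0,1] → [0,1] be the generating function of a Böttcher-case offspring law (p₀ = p₁ = 0), with μ = min{j : p_j > 0} ≥ 2. Then for each s ∈ [0,1], the limit B(s) := lim_{n→∞} (fₙ(s))^{μ^{-n}} exists, where fₙ denotes the n-th iterate of f. -/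
open Real Filter Set

/-!
Since `p j = 0` for `j < μ`, the generating function satisfies `0 ≤ f x ≤ x ^ μ` on `[0,1]`.
Hence `fₙ₊₁(s) ≤ fₙ(s) ^ μ`, and taking `μ^{n+1}`-th roots shows that `fₙ(s) ^ (μ⁻ⁿ)` is
nonincreasing in `n`; being nonnegative, it converges.
-/

theorem tsum_mul_pow_le_pow {p : ℕ → ℝ} {m : ℕ} (hp : ∀ j, 0 ≤ p j) (hsum : ∑' j, p j = 1)
    (hmin : ∀ j, p j ≠ 0 → m ≤ j) {x : ℝ} (hx0 : 0 ≤ x) (hx1 : x ≤ 1) :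
    ∑' j, p j * x ^ j ≤ x ^ m := by
  have hp_summable : Summable p := by
    by_contra h
    rw [tsum_eq_zero_of_not_summable h] at hsum
    exact zero_ne_one hsum
  have hle : ∀ j, p j * x ^ j ≤ p j * x ^ m := by
    intro j
    by_cases hj : p j = 0
    · simp [hj]
    · exact mul_le_mul_of_nonneg_left (pow_le_pow_of_le_one hx0 hx1 (hmin j hj)) (hp j)
  have hsummable : Summable fun j => p j * x ^ j :=
    (hp_summable.mul_right _).of_nonneg_of_le (fun j => mul_nonneg (hp j) (pow_nonneg hx0 j)) hle
  calc ∑' j, p j * x ^ j ≤ ∑' j, p j * x ^ m := hsummable.tsum_le_tsum hle (hp_summable.mul_right _)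
    _ = x ^ m := by rw [tsum_mul_right, hsum, one_mul]

theorem antitone_rpow_inv_pow_of_le_pow {x : ℕ → ℝ} {m : ℕ} (hm : 0 < m) (hx0 : ∀ n, 0 ≤ x n)
    (hx : ∀ n, x (n + 1) ≤ x n ^ m) : Antitone fun n => x n ^ ((m : ℝ) ^ n)⁻¹ := by
  refine antitone_nat_of_succ_le fun n => ?_
  calc x (n + 1) ^ ((m : ℝ) ^ (n + 1))⁻¹ ≤ (x n ^ m) ^ ((m : ℝ) ^ (n + 1))⁻¹ :=
        rpow_le_rpow (hx0 _) (hx n) (by positivity)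
    _ = x n ^ ((m : ℝ) ^ n)⁻¹ := by
        rw [← rpow_natCast, ← rpow_mul (hx0 n)]
        congr 1
        field_simp
        ring

theorem exists_tendsto_rpow_inv_pow_of_le_pow {x : ℕ → ℝ} {m : ℕ} (hm : 0 < m)
    (hx0 : ∀ n, 0 ≤ x n) (hx : ∀ n, x (n + 1) ≤ x n ^ m) :
    ∃ B : ℝ, Tendsto (fun n => x n ^ ((m : ℝ) ^ n)⁻¹) atTop (nhds B) :=
  ⟨_, tendsto_atTop_ciInf (antitone_rpow_inv_pow_of_le_pow hm hx0 hx)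
    ⟨0, by rintro _ ⟨n, rfl⟩; exact rpow_nonneg (hx0 n) _⟩⟩

theorem boettcher_limit_exists_general
    (p : ℕ → ℝ) (hp : ∀ j, 0 ≤ p j) (hsum : ∑' j, p j = 1)
    (μ : ℕ) (hμ : 2 ≤ μ) (hmin : ∀ j, p j ≠ 0 → μ ≤ j)
    (f : ℝ → ℝ) (hf : ∀ s : ℝ, f s = ∑' j, p j * s ^ j) :
    ∀ s : ℝ, 0 ≤ s → s ≤ 1 →
      ∃ B : ℝ, Tendsto (fun n : ℕ => (f^[n] s) ^ (((μ : ℝ) ^ n)⁻¹)) atTop (nhds B) := by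
  intro s hs0 hs1
  have hf_le : ∀ x ∈ Icc (0 : ℝ) 1, f x ≤ x ^ μ := fun x hx =>
    (hf x).trans_le (tsum_mul_pow_le_pow hp hsum hmin hx.1 hx.2)
  have hmaps : MapsTo f (Icc 0 1) (Icc 0 1) := fun x hx =>
    ⟨(hf x).symm ▸ tsum_nonneg fun j => mul_nonneg (hp j) (pow_nonneg hx.1 j),
      (hf_le x hx).trans (pow_le_one₀ hx.1 hx.2)⟩
  have hiter : ∀ n, f^[n] s ∈ Icc (0 : ℝ) 1 := fun n => hmaps.iterate n ⟨hs0, hs1⟩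
  refine exists_tendsto_rpow_inv_pow_of_le_pow (by omega) (fun n => (hiter n).1) fun n => ?_
  rw [Function.iterate_succ_apply']
  exact hf_le _ (hiter n)

/-- In the Böttcher case, `(fₙ(s))^{μ^{-n}}` converges for every `s ∈ [0,1]`. -/
theorem boettcher_limit_exists
    (p : ℕ → ℝ) (hp : ∀ j, 0 ≤ p j) (hsum : ∑' j, p j = 1)
    (μ : ℕ) (hμ : 2 ≤ μ) (hpμ : 0 < p μ) (hmin : ∀ j, p j ≠ 0 → μ ≤ j)
    (f : ℝ → ℝ) (hf : ∀ s : ℝ, f s = ∑' j, p j * s ^ j) :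
    ∀ s : ℝ, 0 ≤ s → s ≤ 1 →
      ∃ B : ℝ, Tendsto (fun n : ℕ => (f^[n] s) ^ (((μ : ℝ) ^ n)⁻¹)) atTop (nhds B) :=
  boettcher_limit_exists_general p hp hsum μ hμ hmin f hf
end
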